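/- The sentence φ_k is not equivalent over the class of all finite τ-structures to any ∃^k∀* sentence: for every natural number n and every quantifier-free FO(τ) formula β(x₁,…,x_k,y₁,…,y_n), there exists a finite τ-structure that satisfies exactly one of φ_k and the sentence ∃x₁…∃x_k ∀y₁…∀y_n β(x₁,…,x_k,y₁,…,y_n). -/

import Mathlib

/-!
On a finite chain `0 < 1 < ⋯ < L` with a total successor relation, `φ_k` says that more than `k`
elements satisfy `P`. Take such a chain `M` with `k + 1` widely spaced `P`-points, so `M ⊨ φ_k`.
If `M ⊨ ∃x̄ ∀ȳ β` with witnesses `ā`, some `P`-point `p` is far from all of `ā`; removing `p` from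
`P` gives a chain `M'` with `M' ⊭ φ_k`. Still `M' ⊨ ∀ȳ β(ā, ȳ)`: for every `n`-tuple `b̄` of `M'`, a
shift of a window around `p` maps `(c, d, ā, b̄)` to a tuple of `M` with the same atomic type,
moving any `bⱼ` near `p` past `p`; so the quantifier-free `β` cannot tell the two apart.
-/

open FirstOrder Language

namespace LTFinite

/-- Relation symbols of the vocabulary `τ = {≤, S, P, c, d}`: binary `≤` and `S`, unary `P`. -/
inductive TauRel : ℕ → Type
  | le : TauRel 2
  | succ : TauRel 2
  | pelt : TauRel 1

/-- Function symbols of `τ`: the constants `c` and `d`. -/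
inductive TauFun : ℕ → Type
  | c : TauFun 0
  | d : TauFun 0

/-- The vocabulary `τ = {≤, S, P, c, d}`. -/
def tau : FirstOrder.Language := ⟨TauFun, TauRel⟩

/-- The atomic formula `t₁ ≤ t₂`. -/
def leF {n : ℕ} (t₁ t₂ : tau.Term (Empty ⊕ Fin n)) : tau.BoundedFormula Empty n :=
  Relations.boundedFormula₂ (TauRel.le : tau.Relations 2) t₁ t₂

/-- The atomic formula `S(t₁, t₂)`. -/
def sF {n : ℕ} (t₁ t₂ : tau.Term (Empty ⊕ Fin n)) : tau.BoundedFormula Empty n :=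
  Relations.boundedFormula₂ (TauRel.succ : tau.Relations 2) t₁ t₂

/-- The atomic formula `P(t)`. -/
def pF {n : ℕ} (t : tau.Term (Empty ⊕ Fin n)) : tau.BoundedFormula Empty n :=
  Relations.boundedFormula₁ (TauRel.pelt : tau.Relations 1) t

/-- The constant term `c`. -/
def cT {n : ℕ} : tau.Term (Empty ⊕ Fin n) := Constants.term TauFun.c

/-- The constant term `d`. -/
def dT {n : ℕ} : tau.Term (Empty ⊕ Fin n) := Constants.term TauFun.d

/-- `ξ₁`: `≤` is a (reflexive) linear order. -/
def xi1 : tau.Sentence :=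
  ∀' ∀' ∀' ((leF &0 &0) ⊓ (((leF &0 &1) ⊓ (leF &1 &2)) ⟹ (leF &0 &2)) ⊓
    (((leF &0 &1) ⊓ (leF &1 &0)) ⟹ Term.bdEqual (&0) (&1)) ⊓ ((leF &0 &1) ⊔ (leF &1 &0)))

/-- `ξ₂`: `c` is minimum and `d` is maximum under `≤`. -/
def xi2 : tau.Sentence :=
  ∀' ((leF cT &0) ⊓ (leF &0 dT))

/-- `ξ₃`: `S(x, y)` implies that `y` is the successor of `x` under `≤`. -/
def xi3 : tau.Sentence :=
  ∀' ∀' ∀' ((sF &0 &1) ⟹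
    ((leF &0 &1) ⊓ ∼(Term.bdEqual (&0) (&1)) ⊓ ((leF &0 &2) ⟹ ((Term.bdEqual (&2) (&0)) ⊔ (leF &1 &2)))))

/-- `ξ₄`: every element other than `d` has an `S`-successor. -/
def xi4 : tau.Sentence :=
  ∀' ((∼(Term.bdEqual (&0) dT)) ⟹ ∃' (sF &0 &1))

/-- `ξ₅ k`: at most `k` elements satisfy `P`. -/
def xi5 (k : ℕ) : tau.Sentence :=
  ((List.ofFn fun i : Fin (k + 1) => pF (Term.var (Sum.inr i))).foldr (· ⊓ ·) ⊤ ⟹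
      (((List.finRange (k + 1) ×ˢ List.finRange (k + 1)).filter (fun ij => ij.1 < ij.2)).map
          fun ij => Term.bdEqual (Term.var (Sum.inr ij.1)) (Term.var (Sum.inr ij.2))).foldr
        (· ⊔ ·) ⊥).alls

/-- The sentence `φ_k := (ξ₁ ∧ ξ₂ ∧ ξ₃) ∧ ¬(ξ₄ ∧ ξ₅)`. -/
def phi (k : ℕ) : tau.Sentence :=
  (xi1 ⊓ xi2 ⊓ xi3) ⊓ ∼(xi4 ⊓ xi5 k)

/-- Universally quantify over the last `n` free (de Bruijn) variables of a bounded formula,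
leaving the first `k` variables free. -/
def allsFrom (k : ℕ) : ∀ {n : ℕ}, tau.BoundedFormula Empty (k + n) → tau.BoundedFormula Empty k
  | 0, ψ => ψ
  | _ + 1, ψ => allsFrom k ψ.all

/-- The `∃^k∀*` sentence `∃x₁…∃x_k ∀y₁…∀y_n ψ` built from a quantifier-free matrix `ψ`. -/
def existsForallSentence (k n : ℕ) (ψ : tau.BoundedFormula Empty (k + n)) : tau.Sentence :=
  (allsFrom k ψ).exs

lemma exists_lt_and_map_eq_iff_not_injective {ι α : Type*} [LinearOrder ι] {f : ι → α} :
    (∃ a b, a < b ∧ f a = f b) ↔ ¬ f.Injective := by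
  rw [Function.not_injective_iff]
  constructor
  · rintro ⟨a, b, hab, hf⟩
    exact ⟨a, b, hf, hab.ne⟩
  · rintro ⟨a, b, hf, hab⟩
    rcases hab.lt_or_gt with hab | hab
    exacts [⟨a, b, hab, hf⟩, ⟨b, a, hab, hf.symm⟩]

lemma exists_forall_notMem_Ico_of_card_le {n : ℕ} {Y : Finset ℕ} (hY : Y.card ≤ n) (a w : ℕ) :
    ∃ b ≤ n, ∀ y ∈ Y, y ∉ Set.Ico (a + b * w) (a + b * w + w) := by
  obtain ⟨b, hb, hbY⟩ := Finset.exists_mem_notMem_of_card_lt_card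
    (s := Y.image fun y => (y - a) / w) (t := Finset.range (n + 1))
    (by simpa using Finset.card_image_le.trans_lt (Nat.lt_succ_of_le hY))
  refine ⟨b, Nat.lt_succ_iff.1 (Finset.mem_range.1 hb), fun y hy ⟨h₁, h₂⟩ => hbY ?_⟩
  exact Finset.mem_image.2 ⟨y, hy, Nat.div_eq_of_lt_le (by omega) (by rw [add_one_mul]; omega)⟩

lemma mul_add_le_mul_of_lt {t t' B : ℕ} (h : t < t') : t * B + B ≤ t' * B := by
  rw [← add_one_mul]
  exact Nat.mul_le_mul_right B h

theorem _root_.FirstOrder.Language.BoundedFormula.IsQF.realize_iff_of_isAtomic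
    {L : Language} {M N : Type*} [L.Structure M] [L.Structure N] {α : Type*} {n : ℕ}
    {φ : L.BoundedFormula α n} (hφ : φ.IsQF) {v : α → M} {xs : Fin n → M} {w : α → N}
    {ys : Fin n → N}
    (h : ∀ ψ : L.BoundedFormula α n, ψ.IsAtomic → (ψ.Realize v xs ↔ ψ.Realize w ys)) :
    φ.Realize v xs ↔ φ.Realize w ys := by
  induction hφ with
  | falsum => exact Iff.rfl
  | of_isAtomic hψ => exact h _ hψ
  | imp _ _ ih₁ ih₂ => simp only [BoundedFormula.realize_imp, ih₁, ih₂]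

lemma realize_allsFrom {M : Type*} [tau.Structure M] (k : ℕ) :
    ∀ {n : ℕ} (ψ : tau.BoundedFormula Empty (k + n)) (v : Empty → M) (xs : Fin k → M),
      (allsFrom k ψ).Realize v xs ↔ ∀ ys : Fin n → M, ψ.Realize v (Fin.append xs ys)
  | 0, ψ, v, xs => by
    simp only [allsFrom, Unique.forall_iff, Fin.append_right_nil _ _ rfl]
    rfl
  | n + 1, ψ, v, xs => by
    rw [allsFrom, realize_allsFrom k ψ.all v xs]
    simp only [BoundedFormula.realize_all, ← Fin.append_snoc]
    exact ⟨fun h ys => by simpa using h (Fin.init ys) (ys (Fin.last n)),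
      fun h ys a => h (Fin.snoc ys a)⟩

lemma realize_existsForallSentence {M : Type*} [tau.Structure M] {k n : ℕ}
    {ψ : tau.BoundedFormula Empty (k + n)} :
    M ⊨ existsForallSentence k n ψ ↔
      ∃ xs : Fin k → M, ∀ ys : Fin n → M, ψ.Realize default (Fin.append xs ys) := by
  simp only [existsForallSentence, Sentence.Realize, BoundedFormula.realize_exs, realize_allsFrom]

@[ext]
structure Chain (L : ℕ) (Q : Finset ℕ) where
  val : ℕ
  val_le : val ≤ L

namespace Chain

variable {L : ℕ} {Q : Finset ℕ}

instance : Finite (Chain L Q) :=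
  Finite.of_injective (fun x : Chain L Q => (⟨x.val, Nat.lt_succ_of_le x.val_le⟩ : Fin (L + 1)))
    fun _ _ h => Chain.ext (Fin.mk.inj_iff.1 h)

instance : Nonempty (Chain L Q) := ⟨⟨0, L.zero_le⟩⟩

instance : tau.Structure (Chain L Q) where
  funMap {_} f _ := match f with
    | .c => ⟨0, L.zero_le⟩
    | .d => ⟨L, le_rfl⟩
  RelMap {_} r v := match r with
    | .le => (v 0).val ≤ (v 1).val
    | .succ => (v 1).val = (v 0).val + 1
    | .pelt => (v 0).val ∈ Q

@[simp] lemma relMap_le {v : Fin 2 → Chain L Q} :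
    Structure.RelMap (L := tau) (TauRel.le : tau.Relations 2) v ↔ (v 0).val ≤ (v 1).val := Iff.rfl

@[simp] lemma relMap_succ {v : Fin 2 → Chain L Q} :
    Structure.RelMap (L := tau) (TauRel.succ : tau.Relations 2) v ↔ (v 1).val = (v 0).val + 1 :=
  Iff.rfl

@[simp] lemma relMap_pelt {v : Fin 1 → Chain L Q} :
    Structure.RelMap (L := tau) (TauRel.pelt : tau.Relations 1) v ↔ (v 0).val ∈ Q := Iff.rfl

@[simp] lemma val_funMap_c {v : Fin 0 → Chain L Q} :
    (Structure.funMap (L := tau) (TauFun.c : tau.Functions 0) v).val = 0 := rfl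

@[simp] lemma val_funMap_d {v : Fin 0 → Chain L Q} :
    (Structure.funMap (L := tau) (TauFun.d : tau.Functions 0) v).val = L := rfl

@[simp] lemma realize_leF {n : ℕ} {xs : Fin n → Chain L Q} {t₁ t₂ : tau.Term (Empty ⊕ Fin n)} :
    (leF t₁ t₂).Realize default xs ↔
      (t₁.realize (Sum.elim default xs)).val ≤ (t₂.realize (Sum.elim default xs)).val := Iff.rfl

@[simp] lemma realize_sF {n : ℕ} {xs : Fin n → Chain L Q} {t₁ t₂ : tau.Term (Empty ⊕ Fin n)} :
    (sF t₁ t₂).Realize default xs ↔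
      (t₂.realize (Sum.elim default xs)).val = (t₁.realize (Sum.elim default xs)).val + 1 := Iff.rfl

@[simp] lemma realize_pF {n : ℕ} {xs : Fin n → Chain L Q} {t : tau.Term (Empty ⊕ Fin n)} :
    (pF t).Realize default xs ↔ (t.realize (Sum.elim default xs)).val ∈ Q := Iff.rfl

@[simp] lemma realize_cT {n : ℕ} {v : Empty ⊕ Fin n → Chain L Q} : (cT.realize v).val = 0 := rfl

@[simp] lemma realize_dT {n : ℕ} {v : Empty ⊕ Fin n → Chain L Q} : (dT.realize v).val = L := rfl

lemma realize_xi1 : Chain L Q ⊨ xi1 := by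
  simp [xi1, Sentence.Realize, Formula.Realize, Fin.snoc, Chain.ext_iff]
  omega

lemma realize_xi2 : Chain L Q ⊨ xi2 := by
  simp [xi2, Sentence.Realize, Formula.Realize, Fin.snoc, Chain.val_le]

lemma realize_xi3 : Chain L Q ⊨ xi3 := by
  simp [xi3, Sentence.Realize, Formula.Realize, Fin.snoc, Chain.ext_iff]
  omega

lemma realize_xi4 : Chain L Q ⊨ xi4 := by
  have h (x : Chain L Q) (hx : x.val ≠ L) : ∃ y : Chain L Q, y.val = x.val + 1 :=
    ⟨⟨x.val + 1, by have := x.val_le; omega⟩, rfl⟩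
  simpa [xi4, Sentence.Realize, Formula.Realize, Fin.snoc, Chain.ext_iff] using h

lemma realize_xi5_iff {k : ℕ} :
    Chain L Q ⊨ xi5 k ↔ ∀ f : Fin (k + 1) → Chain L Q, (∀ i, (f i).val ∈ Q) → ¬ f.Injective := by
  simp [xi5, Sentence.Realize, BoundedFormula.realize_foldr_inf, BoundedFormula.realize_foldr_sup,
    -List.ofFn_succ, Prod.exists, exists_lt_and_map_eq_iff_not_injective]

lemma realize_phi_iff {k : ℕ} (hQ : ∀ q ∈ Q, q ≤ L) : Chain L Q ⊨ phi k ↔ k < Q.card := by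
  simp only [phi, Sentence.realize_inf, Sentence.realize_not, realize_xi1, realize_xi2,
    realize_xi3, realize_xi4, realize_xi5_iff, true_and, not_forall, not_not, exists_prop]
  constructor
  · rintro ⟨f, hfQ, hf⟩
    simpa using Finset.card_le_card_of_injOn (s := Finset.univ) (fun i => (f i).val)
      (fun i _ => hfQ i) fun i _ j _ h => hf (Chain.ext h)
  · intro hk
    obtain ⟨e, he⟩ := Function.Embedding.exists_of_card_le_finset (α := Fin (k + 1)) (s := Q)
      (by simpa using hk)
    exact ⟨fun i => ⟨e i, hQ _ (he ⟨i, rfl⟩)⟩, fun i => he ⟨i, rfl⟩,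
      fun i j h => e.injective (congrArg Chain.val h)⟩

end Chain

structure IsPartialIso (D : Set ℕ) (Q' Q : Finset ℕ) (F : ℕ → ℕ) : Prop where
  le_iff : ∀ u ∈ D, ∀ w ∈ D, F u ≤ F w ↔ u ≤ w
  succ_iff : ∀ u ∈ D, ∀ w ∈ D, F w = F u + 1 ↔ w = u + 1
  mem_iff : ∀ u ∈ D, F u ∈ Q ↔ u ∈ Q'

lemma IsPartialIso.eq_iff {D : Set ℕ} {Q' Q : Finset ℕ} {F : ℕ → ℕ} (hF : IsPartialIso D Q' Q F)
    {u w : ℕ} (hu : u ∈ D) (hw : w ∈ D) : F u = F w ↔ u = w := by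
  rw [le_antisymm_iff, le_antisymm_iff, hF.le_iff u hu w hw, hF.le_iff w hw u hu]

theorem Chain.realize_iff_of_isPartialIso {L : ℕ} {Q' Q : Finset ℕ} {D : Set ℕ} {F : ℕ → ℕ}
    (hF : IsPartialIso D Q' Q F) (h0 : 0 ∈ D) (hL : L ∈ D) (hF0 : F 0 = 0) (hFL : F L = L)
    {m : ℕ} {xs : Fin m → Chain L Q'} {ys : Fin m → Chain L Q}
    (hxs : ∀ i, (xs i).val ∈ D) (hys : ∀ i, (ys i).val = F (xs i).val)
    {φ : tau.BoundedFormula Empty m} (hφ : φ.IsQF) :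
    φ.Realize default ys ↔ φ.Realize default xs := by
  have hterm : ∀ t : tau.Term (Empty ⊕ Fin m), (t.realize (Sum.elim default xs)).val ∈ D ∧
      (t.realize (Sum.elim default ys)).val = F (t.realize (Sum.elim default xs)).val
    | .var (.inl e) => e.elim
    | .var (.inr i) => ⟨hxs i, hys i⟩
    | .func .c _ => ⟨h0, hF0.symm⟩
    | .func .d _ => ⟨hL, hFL.symm⟩
  refine hφ.realize_iff_of_isAtomic fun ψ hψ => ?_
  cases hψ with
  | equal t₁ t₂ =>
    simp only [BoundedFormula.realize_bdEqual, Chain.ext_iff, (hterm t₁).2, (hterm t₂).2]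
    exact hF.eq_iff (hterm t₁).1 (hterm t₂).1
  | rel R ts =>
    simp only [BoundedFormula.realize_rel]
    cases R with
    | le =>
      simp only [Chain.relMap_le, (hterm (ts 0)).2, (hterm (ts 1)).2]
      exact hF.le_iff _ (hterm _).1 _ (hterm _).1
    | succ =>
      simp only [Chain.relMap_succ, (hterm (ts 0)).2, (hterm (ts 1)).2]
      exact hF.succ_iff _ (hterm _).1 _ (hterm _).1
    | pelt =>
      simp only [Chain.relMap_pelt, (hterm (ts 0)).2]
      exact hF.mem_iff _ (hterm _).1

-- Shifting `(l, g]` up by `p - l` moves `p` out of the way; since `D` misses `l` and the landing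
-- window `(g, g + (p - l) + 1]`, no order or successor relation inside `D` changes.
lemma isPartialIso_shift {D : Set ℕ} {Q : Finset ℕ} {l g p : ℕ} (hlp : l < p) (hpg : p ≤ g)
    (hD : ∀ u ∈ D, u ≠ l ∧ (u ≤ g ∨ g + (p - l) + 1 < u))
    (hQ : ∀ q ∈ Q, q ≠ p → q ≤ l ∨ g + (p - l) < q) :
    IsPartialIso D (Q.erase p) Q fun x => if l < x ∧ x ≤ g then x + (p - l) else x := by
  refine ⟨fun u hu w hw => ?_, fun u hu w hw => ?_, fun u hu => ?_⟩
  · have := hD u hu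
    have := hD w hw
    split_ifs <;> omega
  · have := hD u hu
    have := hD w hw
    split_ifs <;> omega
  · rw [Finset.mem_erase]
    split_ifs with h
    · refine ⟨fun hq => ?_, fun ⟨hup, hq⟩ => ?_⟩
      · have := hQ _ hq (by omega)
        omega
      · have := hQ _ hq hup
        omega
    · exact ⟨fun hq => ⟨by omega, hq⟩, And.right⟩

-- `l` is one of the `n + 1` points below `p` and `g` one of `n + 1` blocks of width `n + 3` above
-- `p` that `Y` misses; the whole shift stays within distance `(n + 1) * (n + 3)` of `p`.
theorem exists_isPartialIso_erase {n p r : ℕ} {Q Y : Finset ℕ} (hY : Y.card ≤ n) (hp : n < p)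
    (hr : (n + 1) * (n + 3) ≤ r) (hQ : ∀ q ∈ Q, q ≠ p → r < q.dist p) :
    ∃ F : ℕ → ℕ, IsPartialIso (↑Y ∪ {x | r < x.dist p}) (Q.erase p) Q F ∧
      ∀ x, r < x.dist p → F x = x := by
  obtain ⟨i, hi, hl⟩ := exists_forall_notMem_Ico_of_card_le hY (p - (n + 1)) 1
  obtain ⟨j, hj, hg⟩ := exists_forall_notMem_Ico_of_card_le hY p (n + 3)
  have hjn : j * (n + 3) ≤ n * (n + 3) := Nat.mul_le_mul_right _ hj
  have hr' : (n + 1) * (n + 3) = n * (n + 3) + n + 3 := by ring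
  refine ⟨_, isPartialIso_shift (l := p - (n + 1) + i * 1) (g := p + j * (n + 3))
    (by omega) (by omega) ?_ fun q hq hqp => ?_, fun x hx => if_neg ?_⟩
  · rintro u (hu | hu)
    · have h₁ := hl u hu
      have h₂ := hg u hu
      simp only [Set.mem_Ico, not_and, not_lt] at h₁ h₂
      omega
    · have : r < u - p + (p - u) := hu
      omega
  · have : r < q - p + (p - q) := hQ q hq hqp
    omega
  · unfold Nat.dist at hx
    omega

theorem Chain.realize_existsForallSentence_erase {k n L p r : ℕ} {Q : Finset ℕ}
    {β : tau.BoundedFormula Empty (k + n)} (hβ : β.IsQF) (hr : (n + 1) * (n + 3) ≤ r)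
    (hQ : ∀ q ∈ Q, q ≠ p → r < q.dist p) (h0 : r < Nat.dist 0 p) (hL : r < L.dist p)
    (a : Fin k → Chain L Q) (ha : ∀ i, r < (a i).val.dist p)
    (hβa : ∀ ys, β.Realize default (Fin.append a ys)) :
    Chain L (Q.erase p) ⊨ existsForallSentence k n β := by
  rw [realize_existsForallSentence]
  refine ⟨fun i => ⟨(a i).val, (a i).val_le⟩, fun ys => ?_⟩
  have hp : n < p := by
    have : n ≤ (n + 1) * (n + 3) := by nlinarith
    unfold Nat.dist at h0
    omega
  set Y := Finset.univ.image fun j => (ys j).val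
  obtain ⟨F, hF, hFfar⟩ := exists_isPartialIso_erase
    (Finset.card_image_le.trans_eq (Finset.card_fin n) : Y.card ≤ n) hp hr hQ
  have hys (j : Fin n) : (ys j).val ∈ (↑Y ∪ {x | r < x.dist p} : Set ℕ) := Or.inl (by simp [Y])
  have hle (j : Fin n) : F (ys j).val ≤ L :=
    ((hF.le_iff _ (hys j) _ (Or.inr hL)).2 (ys j).val_le).trans_eq (hFfar L hL)
  refine (Chain.realize_iff_of_isPartialIso hF (Or.inr h0) (Or.inr hL) (hFfar 0 h0) (hFfar L hL)
    (ys := Fin.append a fun j => ⟨F (ys j).val, hle j⟩) (fun i => ?_) (fun i => ?_) hβ).1 (hβa _)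
  · refine Fin.addCases (fun i => ?_) (fun j => ?_) i
    · simpa using Or.inr (ha i)
    · simp
  · refine Fin.addCases (fun i => ?_) (fun j => ?_) i
    · simpa using (hFfar _ (ha i)).symm
    · simp

-- The `t`-th point is the centre of the block `[t * (2r+2), (t+1) * (2r+2))`.
def spacedPoints (k r : ℕ) : Finset ℕ :=
  (Finset.range (k + 1)).image fun t => t * (2 * r + 2) + r + 1

section spacedPoints

variable {k r : ℕ}

lemma lt_dist_of_notMem_Ico {t x : ℕ}
    (hx : x ∉ Set.Ico (t * (2 * r + 2)) (t * (2 * r + 2) + (2 * r + 2))) :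
    r < x.dist (t * (2 * r + 2) + r + 1) := by
  simp only [Set.mem_Ico, not_and, not_lt] at hx
  unfold Nat.dist
  omega

lemma card_spacedPoints : (spacedPoints k r).card = k + 1 := by
  refine (Finset.card_image_of_injective _ fun t t' h => ?_).trans (Finset.card_range _)
  exact Nat.eq_of_mul_eq_mul_right (by omega) (Nat.add_right_cancel (Nat.add_right_cancel h))

lemma le_of_mem_spacedPoints {q : ℕ} (hq : q ∈ spacedPoints k r) : q ≤ (k + 1) * (2 * r + 2) := by
  obtain ⟨t, ht, rfl⟩ := Finset.mem_image.1 hq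
  have := mul_add_le_mul_of_lt (B := 2 * r + 2) (Finset.mem_range.1 ht)
  omega

lemma lt_dist_of_mem_spacedPoints {p : ℕ} (hp : p ∈ spacedPoints k r) :
    r < Nat.dist 0 p ∧ r < ((k + 1) * (2 * r + 2)).dist p ∧
      ∀ q ∈ spacedPoints k r, q ≠ p → r < q.dist p := by
  obtain ⟨t, ht, rfl⟩ := Finset.mem_image.1 hp
  refine ⟨by unfold Nat.dist; omega, lt_dist_of_notMem_Ico fun ⟨_, h⟩ => ?_, ?_⟩
  · have := mul_add_le_mul_of_lt (B := 2 * r + 2) (Finset.mem_range.1 ht)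
    omega
  · rintro _ hq hne
    obtain ⟨t', -, rfl⟩ := Finset.mem_image.1 hq
    refine lt_dist_of_notMem_Ico fun ⟨h₁, h₂⟩ => ?_
    rcases lt_trichotomy t t' with h | rfl | h
    · have := mul_add_le_mul_of_lt (B := 2 * r + 2) h
      omega
    · exact hne rfl
    · have := mul_add_le_mul_of_lt (B := 2 * r + 2) h
      omega

lemma exists_mem_spacedPoints_forall_lt_dist {A : Finset ℕ} (hA : A.card ≤ k) :
    ∃ p ∈ spacedPoints k r, ∀ x ∈ A, r < x.dist p := by
  obtain ⟨t, ht, hA⟩ := exists_forall_notMem_Ico_of_card_le hA 0 (2 * r + 2)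
  refine ⟨_, Finset.mem_image_of_mem _ (Finset.mem_range_succ_iff.2 ht), fun x hx => ?_⟩
  exact lt_dist_of_notMem_Ico (by simpa using hA x hx)

end spacedPoints

/-- **`φ_k` is not equivalent, over the class of all finite `τ`-structures, to any `∃^k∀*`
sentence**: for every `n` and every quantifier-free matrix `β` with `k + n` variables, some
finite `τ`-structure satisfies exactly one of `φ_k` and `∃x₁…∃x_k ∀y₁…∀y_n β`. -/
theorem phi_not_equivalent_to_exists_k_forall (k n : ℕ)
    (β : tau.BoundedFormula Empty (k + n)) (hβ : β.IsQF) :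
    ∃ (M : Type) (_ : tau.Structure M), Finite M ∧ Nonempty M ∧
      Xor' (M ⊨ phi k) (M ⊨ existsForallSentence k n β) := by
  set r := (n + 1) * (n + 3)
  set L := (k + 1) * (2 * r + 2)
  set Q := spacedPoints k r
  have hQL : ∀ q ∈ Q, q ≤ L := fun _ => le_of_mem_spacedPoints
  have hphi : Chain L Q ⊨ phi k := by
    rw [Chain.realize_phi_iff hQL, card_spacedPoints]
    omega
  by_cases hσ : Chain L Q ⊨ existsForallSentence k n β
  · obtain ⟨a, ha⟩ := realize_existsForallSentence.1 hσ
    set A := Finset.univ.image fun i => (a i).val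
    obtain ⟨p, hpQ, hap⟩ := exists_mem_spacedPoints_forall_lt_dist (r := r)
      (Finset.card_image_le.trans_eq (Finset.card_fin k) : A.card ≤ k)
    obtain ⟨h0, hL, hQp⟩ := lt_dist_of_mem_spacedPoints hpQ
    refine ⟨Chain L (Q.erase p), inferInstance, inferInstance, inferInstance, Or.inr ⟨?_, ?_⟩⟩
    · exact Chain.realize_existsForallSentence_erase hβ le_rfl hQp h0 hL a
        (fun i => hap _ (Finset.mem_image_of_mem _ (Finset.mem_univ i))) ha
    · rw [Chain.realize_phi_iff fun q hq => hQL q (Finset.mem_of_mem_erase hq),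
        Finset.card_erase_of_mem hpQ, card_spacedPoints]
      omega
  · exact ⟨Chain L Q, inferInstance, inferInstance, inferInstance, Or.inl ⟨hphi, hσ⟩⟩

end LTFinite
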